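/- arXiv:2509.10944 — 2 statements merged into one kernel-verified Lean document; each statement's English description precedes it below -/
import Mathlib

section
/- Let X be a proper CAT(0) space and C ⊂ X a closed convex Morse subset with projection constant σ (as in Theorem 3.1(3)). If ℓ : ℝ → X is a geodesic line with ℓ ⊂ N_R(C) for some R > 0, then ℓ ⊂ closure of N_σ(C), and ℓ is parallel to a geodesic line contained in C. -/
open Set Metric

/-- `γ` is a unit-speed geodesic on the interval `[a,b]`. -/
def IsGeodesicOn {X : Type*} [MetricSpace X] (γ : ℝ → X) (a b : ℝ) : Prop :=
  ∀ s ∈ Set.Icc a b, ∀ t ∈ Set.Icc a b, dist (γ s) (γ t) = |s - t|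

/-- `γ` is a unit-speed geodesic from `x` to `y`, parametrized on `[0, dist x y]`. -/
def GeodFromTo {X : Type*} [MetricSpace X] (γ : ℝ → X) (x y : X) : Prop :=
  IsGeodesicOn γ 0 (dist x y) ∧ γ 0 = x ∧ γ (dist x y) = y

/-- The geodesic segment traced by a geodesic `γ` from `x` to `y`. -/
def geodSeg {X : Type*} [MetricSpace X] (γ : ℝ → X) (x y : X) : Set X :=
  γ '' Set.Icc 0 (dist x y)

/-- A CAT(0) space: a geodesic metric space satisfying the CN (Bruhat--Tits)
midpoint inequality, which characterizes CAT(0) among geodesic spaces. -/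
class CAT0 (X : Type*) [MetricSpace X] : Prop where
  geodesic : ∀ x y : X, ∃ γ : ℝ → X, GeodFromTo γ x y
  cn : ∀ x y z m : X, dist y m = dist y z / 2 → dist m z = dist y z / 2 →
    dist x m ^ 2 ≤ (dist x y ^ 2 + dist x z ^ 2) / 2 - dist y z ^ 2 / 4

/-- A subset is (geodesically) convex if it contains every geodesic between its points. -/
def GeodConvex {X : Type*} [MetricSpace X] (C : Set X) : Prop :=
  ∀ γ : ℝ → X, ∀ a b : ℝ, a ≤ b → IsGeodesicOn γ a b → γ a ∈ C → γ b ∈ C →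
    ∀ t ∈ Set.Icc a b, γ t ∈ C

/-- `p` is the closest point projection onto `C`. -/
def IsClosestPointProj {X : Type*} [MetricSpace X] (C : Set X) (p : X → X) : Prop :=
  ∀ x : X, p x ∈ C ∧ ∀ z ∈ C, dist x (p x) ≤ dist x z

/-- `ℓ` is a (complete, unit-speed) geodesic line. -/
def IsGeodLine {X : Type*} [MetricSpace X] (ℓ : ℝ → X) : Prop :=
  ∀ s t : ℝ, dist (ℓ s) (ℓ t) = |s - t|

/-!
In a CAT(0) space the distance between two geodesics, parametrized proportionally to arc length
by `[0, 1]`, is convex in the parameter: the CN inequality gives this at dyadic parameters, and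
continuity does the rest. Hence `t ↦ d(ℓ t, C)` is a bounded convex function on `ℝ`, so it is a
constant `c`. A geodesic from `ℓ T` to `p (ℓ (-T))` passes `σ`-close to `p (ℓ T)` at a point `w`
with `d(ℓ T, w) ≤ c + σ`, and by convexity `w` is within `O(1/T)` of `ℓ`; as `d(ℓ, C) = c`
everywhere, this forces `c ≤ σ`. Finally, the geodesics `[p (ℓ (-T)), p (ℓ T)] ⊆ C`,
reparametrized by `[-T, T]`, stay `c`-close to `ℓ` and have speed tending to `1`; a cluster point
of them in the compact product `∏ t, C ∩ closedBall (ℓ t) c` is a geodesic line in `C` parallel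
to `ℓ`.
-/

open Filter Topology

section MidpointConvex

variable {φ : ℝ → ℝ}

lemma div_two_pow_mem_Icc {k j : ℕ} (hj : j ≤ 2 ^ k) : (j / 2 ^ k : ℝ) ∈ Icc 0 1 :=
  ⟨by positivity, div_le_one_of_le₀ (by exact_mod_cast hj) (by positivity)⟩

lemma nonpos_at_dyadic_of_midpoint_le (h0 : φ 0 ≤ 0) (h1 : φ 1 ≤ 0)
    (hmid : ∀ s ∈ Icc (0 : ℝ) 1, ∀ t ∈ Icc (0 : ℝ) 1, φ ((s + t) / 2) ≤ (φ s + φ t) / 2)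
    (k : ℕ) : ∀ j : ℕ, j ≤ 2 ^ k → φ (j / 2 ^ k) ≤ 0 := by
  induction k with
  | zero =>
    intro j hj
    interval_cases j <;> simpa
  | succ k ih =>
    intro j hj
    rcases Nat.even_or_odd' j with ⟨i, rfl | rfl⟩
    · have hi : i ≤ 2 ^ k := by omega
      have heq : ((2 * i : ℕ) / 2 ^ (k + 1) : ℝ) = i / 2 ^ k := by
        push_cast; field_simp; ring
      rw [heq]
      exact ih i hi
    · have hi : i + 1 ≤ 2 ^ k := by omega
      have heq : ((2 * i + 1 : ℕ) / 2 ^ (k + 1) : ℝ) =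
          (i / 2 ^ k + (i + 1 : ℕ) / 2 ^ k) / 2 := by
        push_cast; field_simp; ring
      rw [heq]
      have := hmid _ (div_two_pow_mem_Icc (k := k) (j := i) (by omega)) _
        (div_two_pow_mem_Icc hi)
      linarith [ih i (by omega), ih (i + 1) hi]

lemma nonpos_of_midpoint_le (hφ : ContinuousOn φ (Icc 0 1)) (h0 : φ 0 ≤ 0) (h1 : φ 1 ≤ 0)
    (hmid : ∀ s ∈ Icc (0 : ℝ) 1, ∀ t ∈ Icc (0 : ℝ) 1, φ ((s + t) / 2) ≤ (φ s + φ t) / 2)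
    {t : ℝ} (ht : t ∈ Icc (0 : ℝ) 1) : φ t ≤ 0 := by
  have hfloor (k : ℕ) : ⌊t * 2 ^ k⌋₊ ≤ 2 ^ k :=
    Nat.floor_le_of_le (by push_cast; nlinarith [ht.2, pow_pos (two_pos (α := ℝ)) k])
  have hlim : Tendsto (fun k : ℕ => (⌊t * 2 ^ k⌋₊ / 2 ^ k : ℝ)) atTop (𝓝 t) :=
    (tendsto_nat_floor_mul_div_atTop ht.1).comp (tendsto_pow_atTop_atTop_of_one_lt one_lt_two)
  have hclosed := hφ.preimage_isClosed_of_isClosed isClosed_Icc (isClosed_Iic (a := (0 : ℝ)))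
  refine (hclosed.mem_of_tendsto hlim (Eventually.of_forall fun k => ?_)).2
  exact ⟨div_two_pow_mem_Icc (hfloor k), nonpos_at_dyadic_of_midpoint_le h0 h1 hmid k _ (hfloor k)⟩

lemma le_chord_of_midpoint_le {g : ℝ → ℝ} (hg : ContinuousOn g (Icc 0 1))
    (hmid : ∀ s ∈ Icc (0 : ℝ) 1, ∀ t ∈ Icc (0 : ℝ) 1, g ((s + t) / 2) ≤ (g s + g t) / 2)
    {t : ℝ} (ht : t ∈ Icc (0 : ℝ) 1) : g t ≤ (1 - t) * g 0 + t * g 1 := by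
  have := nonpos_of_midpoint_le (φ := fun t => g t - ((1 - t) * g 0 + t * g 1))
    (hg.sub (by fun_prop)) (by simp) (by simp) (fun s hs t ht => by linarith [hmid s hs t ht])
    ht
  linarith

end MidpointConvex

section CAT0

variable {X : Type*} [MetricSpace X]

def IsMidpoint (a b m : X) : Prop := dist a m = dist a b / 2 ∧ dist m b = dist a b / 2

lemma IsMidpoint.symm {a b m : X} (h : IsMidpoint a b m) : IsMidpoint b a m := by
  refine ⟨?_, ?_⟩
  · rw [dist_comm b, dist_comm b a]; exact h.2
  · rw [dist_comm m, dist_comm b a]; exact h.1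

def IsConstSpeedGeodesic (α : ℝ → X) (A : ℝ) : Prop :=
  ∀ s ∈ Icc (0 : ℝ) 1, ∀ t ∈ Icc (0 : ℝ) 1, dist (α s) (α t) = A * |s - t|

lemma IsConstSpeedGeodesic.nonneg {α : ℝ → X} {A : ℝ} (h : IsConstSpeedGeodesic α A) :
    0 ≤ A := by
  simpa using (h 0 (left_mem_Icc.2 zero_le_one) 1 (right_mem_Icc.2 zero_le_one)).symm.trans_ge
    dist_nonneg

lemma IsConstSpeedGeodesic.continuousOn {α : ℝ → X} {A : ℝ} (h : IsConstSpeedGeodesic α A) :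
    ContinuousOn α (Icc 0 1) :=
  (LipschitzOnWith.of_dist_le_mul (K := A.toNNReal) fun s hs t ht => by
    rw [h s hs t ht, Real.coe_toNNReal _ h.nonneg, Real.dist_eq]).continuousOn

lemma IsConstSpeedGeodesic.isMidpoint {α : ℝ → X} {A : ℝ} (h : IsConstSpeedGeodesic α A)
    {s t : ℝ} (hs : s ∈ Icc (0 : ℝ) 1) (ht : t ∈ Icc (0 : ℝ) 1) :
    IsMidpoint (α s) (α t) (α ((s + t) / 2)) := by
  have hm : (s + t) / 2 ∈ Icc (0 : ℝ) 1 := ⟨by linarith [hs.1, ht.1], by linarith [hs.2, ht.2]⟩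
  have habs : |s - (s + t) / 2| = |s - t| / 2 ∧ |(s + t) / 2 - t| = |s - t| / 2 := by
    constructor <;> rw [← abs_two, ← abs_div, abs_two] <;> ring_nf
  refine ⟨?_, ?_⟩
  · rw [h s hs _ hm, h s hs t ht, habs.1]; ring
  · rw [h _ hm t ht, h s hs t ht, habs.2]; ring

lemma IsGeodLine.isConstSpeedGeodesic {ℓ : ℝ → X} (hℓ : IsGeodLine ℓ) (a b : ℝ) :
    IsConstSpeedGeodesic (fun r => ℓ (a + r * (b - a))) |b - a| := by
  intro s _ t _
  rw [hℓ, ← abs_mul]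
  ring_nf

lemma IsGeodesicOn.lipschitzOnWith {γ : ℝ → X} {a b : ℝ} (h : IsGeodesicOn γ a b) :
    LipschitzOnWith 1 γ (Icc a b) :=
  LipschitzOnWith.of_dist_le_mul fun s hs t ht => by rw [h s hs t ht, Real.dist_eq]; simp

lemma GeodFromTo.dist_left {γ : ℝ → X} {x y : X} (h : GeodFromTo γ x y) {u : ℝ}
    (hu : u ∈ Icc 0 (dist x y)) : dist x (γ u) = u := by
  rw [← h.2.1, h.1 0 (left_mem_Icc.2 dist_nonneg) u hu, zero_sub, abs_neg, abs_of_nonneg hu.1]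

lemma GeodFromTo.isCompact_geodSeg {γ : ℝ → X} {x y : X} (h : GeodFromTo γ x y) :
    IsCompact (geodSeg γ x y) :=
  isCompact_Icc.image_of_continuousOn h.1.lipschitzOnWith.continuousOn

lemma mul_mem_Icc_of_mem_Icc_zero_one {r d : ℝ} (hr : r ∈ Icc (0 : ℝ) 1) (hd : 0 ≤ d) :
    r * d ∈ Icc 0 d :=
  ⟨mul_nonneg hr.1 hd, mul_le_of_le_one_left hd hr.2⟩

lemma GeodFromTo.isConstSpeedGeodesic {γ : ℝ → X} {x y : X} (h : GeodFromTo γ x y) :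
    IsConstSpeedGeodesic (fun r => γ (r * dist x y)) (dist x y) := by
  intro s hs t ht
  rw [h.1 _ (mul_mem_Icc_of_mem_Icc_zero_one hs dist_nonneg) _
    (mul_mem_Icc_of_mem_Icc_zero_one ht dist_nonneg), ← sub_mul, abs_mul,
    abs_of_nonneg dist_nonneg, mul_comm]

lemma GeodConvex.geodFromTo_mem {C : Set X} (hC : GeodConvex C) {γ : ℝ → X} {x y : X}
    (h : GeodFromTo γ x y) (hx : x ∈ C) (hy : y ∈ C) {r : ℝ} (hr : r ∈ Icc (0 : ℝ) 1) :
    γ (r * dist x y) ∈ C :=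
  hC γ 0 (dist x y) dist_nonneg h.1 (by rwa [h.2.1]) (by rwa [h.2.2]) _
    (mul_mem_Icc_of_mem_Icc_zero_one hr dist_nonneg)

variable [CAT0 X]

lemma exists_isMidpoint (a b : X) : ∃ m, IsMidpoint a b m := by
  obtain ⟨γ, hγ⟩ := CAT0.geodesic a b
  have h := hγ.isConstSpeedGeodesic.isMidpoint (left_mem_Icc.2 zero_le_one)
    (right_mem_Icc.2 zero_le_one)
  simp only [zero_mul, one_mul, hγ.2.1, hγ.2.2] at h
  exact ⟨_, h⟩

lemma IsMidpoint.dist_le_half {a b c m m' : X} (hm : IsMidpoint a c m)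
    (hm' : IsMidpoint b c m') : dist m m' ≤ dist a b / 2 := by
  have cn₁ := CAT0.cn a b c m' hm'.1 hm'.2
  have cn₂ := CAT0.cn m' a c m hm.1 hm.2
  rw [dist_comm m' a, hm'.2] at cn₂
  have hsq : dist m m' ^ 2 ≤ (dist a b / 2) ^ 2 := by rw [dist_comm]; nlinarith
  exact pow_le_pow_iff_left₀ dist_nonneg (by positivity) two_ne_zero |>.1 hsq

lemma IsMidpoint.dist_le_add_half {a b a' b' m m' : X} (hm : IsMidpoint a b m)
    (hm' : IsMidpoint a' b' m') : dist m m' ≤ (dist a a' + dist b b') / 2 := by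
  obtain ⟨n, hn⟩ := exists_isMidpoint a' b
  calc dist m m' ≤ dist m n + dist n m' := dist_triangle _ _ _
    _ ≤ dist a a' / 2 + dist b b' / 2 :=
        add_le_add (hm.dist_le_half hn) (hn.symm.dist_le_half hm'.symm)
    _ = _ := by ring

lemma IsConstSpeedGeodesic.dist_le_chord {α β : ℝ → X} {A B : ℝ}
    (hα : IsConstSpeedGeodesic α A) (hβ : IsConstSpeedGeodesic β B) {t : ℝ}
    (ht : t ∈ Icc (0 : ℝ) 1) :
    dist (α t) (β t) ≤ (1 - t) * dist (α 0) (β 0) + t * dist (α 1) (β 1) :=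
  le_chord_of_midpoint_le (g := fun t => dist (α t) (β t))
    (continuous_dist.comp_continuousOn (hα.continuousOn.prodMk hβ.continuousOn))
    (fun _ hs _ ht => (hα.isMidpoint hs ht).dist_le_add_half (hβ.isMidpoint hs ht)) ht

lemma IsGeodLine.dist_geodFromTo_le {ℓ γ : ℝ → X} (hℓ : IsGeodLine ℓ) {x y : X}
    (hγ : GeodFromTo γ x y) (a b : ℝ) {r : ℝ} (hr : r ∈ Icc (0 : ℝ) 1) :
    dist (ℓ (a + r * (b - a))) (γ (r * dist x y)) ≤
      (1 - r) * dist (ℓ a) x + r * dist (ℓ b) y := by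
  simpa [hγ.2.1, hγ.2.2] using
    (hℓ.isConstSpeedGeodesic a b).dist_le_chord hγ.isConstSpeedGeodesic hr

end CAT0

lemma ConvexOn.le_of_bddAbove_range {f : ℝ → ℝ} (hf : ConvexOn ℝ univ f)
    (hbdd : BddAbove (range f)) (x y : ℝ) : f y ≤ f x := by
  by_contra! hlt
  obtain ⟨M, hM⟩ := hbdd
  set k := (M - f y) / (f y - f x) + 1
  have hk : 0 < k := by
    have : f y ≤ M := hM ⟨y, rfl⟩
    have : 0 ≤ (M - f y) / (f y - f x) := div_nonneg (by linarith) (by linarith)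
    linarith
  -- `y` divides the segment from `x` to `z` in the ratio `k : 1`, so `f` grows linearly past `y`.
  set z := y + k * (y - x)
  have hy : (1 / (k + 1)) • z + (k / (k + 1)) • x = y := by
    simp only [smul_eq_mul, z]; field_simp; ring
  have hconv := hf.2 (mem_univ z) (mem_univ x) (by positivity) (by positivity)
    (by field_simp; ring : 1 / (k + 1) + k / (k + 1) = 1)
  rw [hy, smul_eq_mul, smul_eq_mul] at hconv
  have hgrow : (k + 1) * f y ≤ f z + k * f x :=
    calc (k + 1) * f y ≤ (k + 1) * (1 / (k + 1) * f z + k / (k + 1) * f x) := by gcongr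
      _ = f z + k * f x := by field_simp
  have hkey : k * (f y - f x) = M - f y + (f y - f x) := by
    simp only [k]; field_simp
  linarith [hM ⟨z, rfl⟩]

section Projection

variable {X : Type*} [MetricSpace X] {C : Set X} {p : X → X}

lemma IsClosestPointProj.dist_eq_infDist (hp : IsClosestPointProj C p) (x : X) :
    dist x (p x) = infDist x C :=
  le_antisymm ((le_infDist ⟨_, (hp x).1⟩).2 (hp x).2) (infDist_le_dist_of_mem (hp x).1)

/-- Condition (3) of Theorem 3.1, with projection constant `σ`. -/
def HasMorseProjConst (C : Set X) (p : X → X) (σ : ℝ) : Prop :=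
  ∀ x : X, ∀ y ∈ C, ∀ γ : ℝ → X, GeodFromTo γ x y → infDist (p x) (geodSeg γ x y) ≤ σ

variable [CAT0 X]

lemma convexOn_infDist_comp_geodLine (hC : GeodConvex C) (hp : IsClosestPointProj C p)
    {ℓ : ℝ → X} (hℓ : IsGeodLine ℓ) : ConvexOn ℝ univ (fun t => infDist (ℓ t) C) := by
  refine ⟨convex_univ, fun s _ t _ a b ha hb hab => ?_⟩
  obtain ⟨γ, hγ⟩ := CAT0.geodesic (p (ℓ s)) (p (ℓ t))
  have hb1 : b ∈ Icc (0 : ℝ) 1 := ⟨hb, by linarith⟩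
  have hmem : γ (b * dist (p (ℓ s)) (p (ℓ t))) ∈ C := hC.geodFromTo_mem hγ (hp _).1 (hp _).1 hb1
  have hpt : a • s + b • t = s + b * (t - s) := by
    rw [smul_eq_mul, smul_eq_mul, eq_sub_of_add_eq hab]; ring
  calc infDist (ℓ (a • s + b • t)) C
      ≤ dist (ℓ (s + b * (t - s))) (γ (b * dist (p (ℓ s)) (p (ℓ t)))) :=
        hpt ▸ infDist_le_dist_of_mem hmem
    _ ≤ (1 - b) * dist (ℓ s) (p (ℓ s)) + b * dist (ℓ t) (p (ℓ t)) :=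
        hℓ.dist_geodFromTo_le hγ s t hb1
    _ = a • infDist (ℓ s) C + b • infDist (ℓ t) C := by
        rw [hp.dist_eq_infDist, hp.dist_eq_infDist, ← hab, smul_eq_mul, smul_eq_mul]; ring

lemma infDist_comp_geodLine_eq (hC : GeodConvex C) (hp : IsClosestPointProj C p)
    {ℓ : ℝ → X} (hℓ : IsGeodLine ℓ) {R : ℝ} (hR : ∀ t, infDist (ℓ t) C < R) (s t : ℝ) :
    infDist (ℓ s) C = infDist (ℓ t) C :=
  have hf := convexOn_infDist_comp_geodLine hC hp hℓ
  have hbdd : BddAbove (range fun t => infDist (ℓ t) C) :=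
    ⟨R, by rintro _ ⟨t, rfl⟩; exact (hR t).le⟩
  le_antisymm (hf.le_of_bddAbove_range hbdd t s) (hf.le_of_bddAbove_range hbdd s t)

end Projection

section Morse

variable {X : Type*} [MetricSpace X] [CAT0 X] {C : Set X} {p : X → X} {ℓ : ℝ → X} {c : ℝ}

lemma IsGeodLine.le_morseConst_add_of_forall_dist_proj_eq (hp : IsClosestPointProj C p) {σ : ℝ}
    (hproj : HasMorseProjConst C p σ) (hℓ : IsGeodLine ℓ) (hc : ∀ t, dist (ℓ t) (p (ℓ t)) = c)
    {T : ℝ} (hT : c < 2 * T) : c ≤ σ + c * (c + σ) / (2 * T - c) := by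
  obtain ⟨γ, hγ⟩ := CAT0.geodesic (ℓ T) (p (ℓ (-T)))
  set L := dist (ℓ T) (p (ℓ (-T)))
  have hc0 : 0 ≤ c := hc 0 ▸ dist_nonneg
  have hL : 2 * T - c ≤ L := by
    have h := dist_triangle (ℓ T) (p (ℓ (-T))) (ℓ (-T))
    rw [hℓ, dist_comm _ (ℓ (-T)), hc, abs_of_nonneg (by linarith)] at h
    linarith
  obtain ⟨_, ⟨u, hu, rfl⟩, hw⟩ := hγ.isCompact_geodSeg.exists_infDist_eq_dist
    ⟨_, 0, left_mem_Icc.2 dist_nonneg, hγ.2.1⟩ (p (ℓ T))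
  have hwσ : dist (p (ℓ T)) (γ u) ≤ σ := hw ▸ hproj _ _ (hp _).1 γ hγ
  have huσ : u ≤ c + σ := by
    have h := dist_triangle (ℓ T) (p (ℓ T)) (γ u)
    rw [hγ.dist_left hu, hc] at h
    linarith
  have hr : u / L ∈ Icc (0 : ℝ) 1 :=
    ⟨div_nonneg hu.1 (by linarith), div_le_one_of_le₀ hu.2 (by linarith)⟩
  have hnear := hℓ.dist_geodFromTo_le hγ T (-T) hr
  rw [div_mul_cancel₀ _ (by linarith : L ≠ 0), dist_self, mul_zero, zero_add, hc] at hnear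
  have hfar : c ≤ dist (ℓ (T + u / L * (-T - T))) (p (ℓ T)) := hc _ ▸ (hp _).2 _ (hp _).1
  have hrc : u / L * c ≤ c * (c + σ) / (2 * T - c) := by
    rw [div_mul_eq_mul_div, mul_comm u c]
    gcongr
    exact mul_nonneg hc0 (by linarith [hu.1])
  linarith [dist_triangle (ℓ (T + u / L * (-T - T))) (γ u) (p (ℓ T)),
    dist_comm (γ u) (p (ℓ T))]

lemma IsGeodLine.le_morseConst_of_forall_dist_proj_eq (hp : IsClosestPointProj C p) {σ : ℝ}
    (hproj : HasMorseProjConst C p σ) (hℓ : IsGeodLine ℓ) (hc : ∀ t, dist (ℓ t) (p (ℓ t)) = c) :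
    c ≤ σ := by
  have hlim : Tendsto (fun T => σ + c * (c + σ) / (2 * T - c)) atTop (𝓝 (σ + 0)) :=
    tendsto_const_nhds.add <| tendsto_const_nhds.div_atTop <|
      tendsto_atTop_add_const_right _ _ (tendsto_id.const_mul_atTop two_pos)
  simpa using ge_of_tendsto hlim <| (eventually_gt_atTop (c / 2)).mono fun T hT =>
    hℓ.le_morseConst_add_of_forall_dist_proj_eq hp hproj hc (by linarith)

end Morse

lemma MapClusterPt.eq_of_tendsto {α Y : Type*} [TopologicalSpace Y] [T2Space Y] {F : Filter α}
    {v : α → Y} {y a : Y} (hy : MapClusterPt y F v) (hv : Tendsto v F (𝓝 a)) : y = a := by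
  by_contra hne
  exact (hy.clusterPt.mono hv).ne (disjoint_nhds_nhds.2 hne).eq_bot

section ParallelLine

variable {X : Type*} [MetricSpace X]

lemma exists_isGeodLine_of_tendsto_dist [ProperSpace X] {C : Set X} (hC : IsClosed C)
    {ℓ : ℝ → X} {c : ℝ} {ι : Type*} {F : Filter ι} [F.NeBot] {u : ι → ℝ → X}
    (hu : ∀ᶠ i in F, ∀ t, u i t ∈ C ∧ dist (ℓ t) (u i t) ≤ c)
    (hlim : ∀ s t, Tendsto (fun i => dist (u i s) (u i t)) F (𝓝 |s - t|)) :
    ∃ ℓ' : ℝ → X, IsGeodLine ℓ' ∧ (∀ t, ℓ' t ∈ C) ∧ ∀ t, dist (ℓ t) (ℓ' t) ≤ c := by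
  have hK : IsCompact (univ.pi fun t => C ∩ closedBall (ℓ t) c) :=
    isCompact_univ_pi fun t => (isCompact_closedBall _ _).inter_left hC
  obtain ⟨ℓ', hℓ'K, hℓ'⟩ := hK.exists_mapClusterPt (f := F) (u := u) <| tendsto_principal.2 <|
    hu.mono fun i hi t _ => ⟨(hi t).1, mem_closedBall_comm.1 (hi t).2⟩
  refine ⟨ℓ', fun s t => ?_, fun t => (hℓ'K t trivial).1,
    fun t => mem_closedBall_comm.1 (hℓ'K t trivial).2⟩
  have hcont : Continuous fun g : ℝ → X => dist (g s) (g t) := by fun_prop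
  exact (hℓ'.continuousAt_comp hcont.continuousAt).eq_of_tendsto (hlim s t)

variable [CAT0 X]

noncomputable def geodesicBetween (x y : X) : ℝ → X := (CAT0.geodesic x y).choose

lemma geodFromTo_geodesicBetween (x y : X) : GeodFromTo (geodesicBetween x y) x y :=
  (CAT0.geodesic x y).choose_spec

noncomputable def projChord (p : X → X) (ℓ : ℝ → X) (T t : ℝ) : X :=
  if |t| ≤ T then
    geodesicBetween (p (ℓ (-T))) (p (ℓ T)) ((t + T) / (2 * T) * dist (p (ℓ (-T))) (p (ℓ T)))
  else p (ℓ t)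

lemma chordParam_mem_Icc {t T : ℝ} (ht : |t| ≤ T) : (t + T) / (2 * T) ∈ Icc (0 : ℝ) 1 := by
  rw [abs_le] at ht
  exact ⟨div_nonneg (by linarith) (by linarith), div_le_one_of_le₀ (by linarith) (by linarith)⟩

variable {C : Set X} {p : X → X} {ℓ : ℝ → X} {c : ℝ}

lemma projChord_mem (hC : GeodConvex C) (hp : IsClosestPointProj C p) (T t : ℝ) :
    projChord p ℓ T t ∈ C := by
  unfold projChord
  split_ifs with ht
  · exact hC.geodFromTo_mem (geodFromTo_geodesicBetween _ _) (hp _).1 (hp _).1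
      (chordParam_mem_Icc ht)
  · exact (hp _).1

lemma dist_projChord_le (hℓ : IsGeodLine ℓ) (hc : ∀ t, dist (ℓ t) (p (ℓ t)) = c) {T : ℝ}
    (hT : 0 < T) (t : ℝ) : dist (ℓ t) (projChord p ℓ T t) ≤ c := by
  unfold projChord
  split_ifs with ht
  · have h := hℓ.dist_geodFromTo_le (geodFromTo_geodesicBetween (p (ℓ (-T))) (p (ℓ T))) (-T) T
      (chordParam_mem_Icc ht)
    have hpt : -T + (t + T) / (2 * T) * (T - -T) = t := by field_simp; ring
    rwa [hpt, hc, hc, ← add_mul, sub_add_cancel, one_mul] at h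
  · exact (hc t).le

lemma dist_projChord_projChord {T s t : ℝ} (hT : 0 < T) (hs : |s| ≤ T) (ht : |t| ≤ T) :
    dist (projChord p ℓ T s) (projChord p ℓ T t) =
      dist (p (ℓ (-T))) (p (ℓ T)) / (2 * T) * |s - t| := by
  unfold projChord
  rw [if_pos hs, if_pos ht, (geodFromTo_geodesicBetween _ _).isConstSpeedGeodesic _
    (chordParam_mem_Icc hs) _ (chordParam_mem_Icc ht), ← sub_div, add_sub_add_right_eq_sub,
    abs_div, abs_of_pos (by positivity : 0 < 2 * T)]
  ring

lemma tendsto_dist_projChord (hℓ : IsGeodLine ℓ) (hc : ∀ t, dist (ℓ t) (p (ℓ t)) = c)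
    (s t : ℝ) :
    Tendsto (fun T => dist (projChord p ℓ T s) (projChord p ℓ T t)) atTop (𝓝 |s - t|) := by
  have hL (T : ℝ) (hT : 0 < T) : |dist (p (ℓ (-T))) (p (ℓ T)) - 2 * T| ≤ 2 * c := by
    have h2T : dist (ℓ (-T)) (ℓ T) = 2 * T := by
      rw [hℓ, show -T - T = -(2 * T) by ring, abs_neg, abs_of_pos (by positivity)]
    have h₁ := dist_triangle4 (p (ℓ (-T))) (ℓ (-T)) (ℓ T) (p (ℓ T))
    have h₂ := dist_triangle4 (ℓ (-T)) (p (ℓ (-T))) (p (ℓ T)) (ℓ T)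
    rw [dist_comm (p (ℓ (-T))) (ℓ (-T)), hc, hc] at h₁
    rw [hc, dist_comm (p (ℓ T)), hc] at h₂
    rw [abs_le]
    constructor <;> linarith
  have hratio : Tendsto (fun T => dist (p (ℓ (-T))) (p (ℓ T)) / (2 * T)) atTop (𝓝 1) := by
    have hlim (a : ℝ) : Tendsto (fun T : ℝ => (2 * T + a) / (2 * T)) atTop (𝓝 1) := by
      have h := tendsto_const_nhds (x := (1 : ℝ)) |>.add <|
        (tendsto_const_nhds (x := a / 2)).div_atTop tendsto_id
      rw [add_zero] at h
      refine h.congr' ?_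
      filter_upwards [eventually_gt_atTop 0] with T hT
      simp only [id]
      field_simp
    refine tendsto_of_tendsto_of_tendsto_of_le_of_le' (hlim (-(2 * c))) (hlim (2 * c)) ?_ ?_ <;>
      filter_upwards [eventually_gt_atTop 0] with T hT <;>
      have := abs_le.1 (hL T hT) <;>
      gcongr <;> linarith
  have h := hratio.mul_const |s - t|
  rw [one_mul] at h
  refine h.congr' ?_
  filter_upwards [eventually_gt_atTop 0, eventually_ge_atTop (max |s| |t|)] with T hT hmax
  exact (dist_projChord_projChord hT ((le_max_left _ _).trans hmax)
    ((le_max_right _ _).trans hmax)).symm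

end ParallelLine

theorem line_near_Morse_subset_general
    {X : Type*} [MetricSpace X] [ProperSpace X] [CAT0 X]
    (C : Set X) (hclosed : IsClosed C) (hconv : GeodConvex C)
    (p : X → X) (hp : IsClosestPointProj C p)
    (σ : ℝ)
    (hproj : ∀ x : X, ∀ y ∈ C, ∀ γ : ℝ → X, GeodFromTo γ x y →
      Metric.infDist (p x) (geodSeg γ x y) ≤ σ)
    (ℓ : ℝ → X) (hℓ : IsGeodLine ℓ)
    (R : ℝ) (hin : ∀ t : ℝ, Metric.infDist (ℓ t) C < R) :
    (∀ t : ℝ, Metric.infDist (ℓ t) C ≤ σ) ∧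
    ∃ ℓ' : ℝ → X, IsGeodLine ℓ' ∧ (∀ t : ℝ, ℓ' t ∈ C) ∧
      ∃ M : ℝ, ∀ t : ℝ, dist (ℓ t) (ℓ' t) ≤ M := by
  set c := infDist (ℓ 0) C
  have hc (t : ℝ) : dist (ℓ t) (p (ℓ t)) = c := by
    rw [hp.dist_eq_infDist, infDist_comp_geodLine_eq hconv hp hℓ hin t 0]
  have hcσ : c ≤ σ := hℓ.le_morseConst_of_forall_dist_proj_eq hp hproj hc
  obtain ⟨ℓ', hℓ', hℓ'C, hℓℓ'⟩ := exists_isGeodLine_of_tendsto_dist hclosed (F := atTop)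
    (u := projChord p ℓ) ((eventually_gt_atTop 0).mono fun T hT t =>
      ⟨projChord_mem hconv hp T t, dist_projChord_le hℓ hc hT t⟩)
    (tendsto_dist_projChord hℓ hc)
  refine ⟨fun t => ?_, ℓ', hℓ', hℓ'C, c, hℓℓ'⟩
  rw [← hp.dist_eq_infDist, hc]
  exact hcσ

/-- Lemma 3.4: if `C` is a closed convex Morse subset with projection constant `σ`
(as in Theorem 3.1(3)) of a proper CAT(0) space, and `ℓ` is a geodesic line contained
in the `R`-neighborhood of `C`, then `ℓ` lies in the closed `σ`-neighborhood of `C`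
and `ℓ` is parallel to a geodesic line contained in `C`. -/
theorem line_near_Morse_subset
    {X : Type*} [MetricSpace X] [ProperSpace X] [CAT0 X]
    (C : Set X) (hclosed : IsClosed C) (hconv : GeodConvex C) (hCne : C.Nonempty)
    (p : X → X) (hp : IsClosestPointProj C p)
    (σ : ℝ) (hσ : 0 ≤ σ)
    (hproj : ∀ x : X, ∀ y ∈ C, ∀ γ : ℝ → X, GeodFromTo γ x y →
      Metric.infDist (p x) (geodSeg γ x y) ≤ σ)
    (ℓ : ℝ → X) (hℓ : IsGeodLine ℓ)
    (R : ℝ) (hR : 0 < R) (hin : ∀ t : ℝ, Metric.infDist (ℓ t) C < R) :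
    (∀ t : ℝ, Metric.infDist (ℓ t) C ≤ σ) ∧
    ∃ ℓ' : ℝ → X, IsGeodLine ℓ' ∧ (∀ t : ℝ, ℓ' t ∈ C) ∧
      ∃ M : ℝ, ∀ t : ℝ, dist (ℓ t) (ℓ' t) ≤ M :=
  line_near_Morse_subset_general C hclosed hconv p hp σ hproj ℓ hℓ R hin
end

section
/- Let X be a proper CAT(0) space and suppose C ⊂ X is a closed convex Morse subset containing all geodesic lines in X parallel to a geodesic line in C, and that a group Γ₀ ⊂ Isom(X) acts cocompactly on C. Then for any r > ε > 0 there exists C₀ = C₀(r,ε) > 0 such that: if ℓ : [a,b] → X is a geodesic segment with ℓ([a,b]) ⊂ N_r(C), then ℓ([a+C₀, b−C₀]) ⊂ N_ε(C) (whenever a + C₀ ≤ b − C₀). -/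
/-! If the claim failed, translating counterexamples by `Γ₀` would give geodesic segments of
length tending to infinity that stay `r`-close to `C`, are `ε`-far from `C` at their midpoints,
and have their midpoints in a fixed ball. By properness they subconverge to a geodesic line `L`
with `infDist (L t) C ≤ r` for all `t` and `ε ≤ infDist (L 0) C`. By convexity of the CAT(0)
distance function, geodesics in `C` between points closest to `L (-N)` and `L N` stay `2r`-close
to `L`, and they subconverge to a line in `C` parallel to `L`. Hence `L ⊆ C`, a contradiction. -/

open Set Metric

/-- `γ` is an `(A,B)`-quasi-geodesic on `[a,b]`. -/
def IsQuasiGeodesicOn {X : Type*} [MetricSpace X] (A B : ℝ) (γ : ℝ → X) (a b : ℝ) : Prop :=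
  ∀ s ∈ Set.Icc a b, ∀ t ∈ Set.Icc a b,
    A⁻¹ * |s - t| - B ≤ dist (γ s) (γ t) ∧ dist (γ s) (γ t) ≤ A * |s - t| + B

/-- A convex subset `C` is Morse if every quasi-geodesic with endpoints in `C` stays
within a bounded distance of `C`, with bound depending only on the quasi-geodesic
constants. -/
def IsMorse {X : Type*} [MetricSpace X] (C : Set X) : Prop :=
  ∀ A : ℝ, 1 ≤ A → ∀ B : ℝ, 0 ≤ B → ∃ D : ℝ, 0 < D ∧
    ∀ γ : ℝ → X, ∀ a b : ℝ, a ≤ b → IsQuasiGeodesicOn A B γ a b →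
      γ a ∈ C → γ b ∈ C → ∀ t ∈ Set.Icc a b, Metric.infDist (γ t) C ≤ D

/-- `ℓ` is parallel to a geodesic line contained in `C`. -/
def ParallelToLineIn {X : Type*} [MetricSpace X] (C : Set X) (ℓ : ℝ → X) : Prop :=
  ∃ ℓ₂ : ℝ → X, IsGeodLine ℓ₂ ∧ (∀ t : ℝ, ℓ₂ t ∈ C) ∧ ∃ M : ℝ, ∀ t : ℝ, dist (ℓ t) (ℓ₂ t) ≤ M

open Filter Topology

section Geodesics

variable {X : Type*} [MetricSpace X]

theorem IsGeodesicOn.mono {γ : ℝ → X} {a b a' b' : ℝ} (h : IsGeodesicOn γ a b)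
    (ha : a ≤ a') (hb : b' ≤ b) : IsGeodesicOn γ a' b' :=
  fun s hs t ht => h s ⟨ha.trans hs.1, hs.2.trans hb⟩ t ⟨ha.trans ht.1, ht.2.trans hb⟩

theorem IsGeodesicOn.comp_add_const {γ : ℝ → X} {a b : ℝ} (h : IsGeodesicOn γ a b) (c : ℝ) :
    IsGeodesicOn (fun t => γ (t + c)) (a - c) (b - c) := by
  intro s hs t ht
  rw [h (s + c) ⟨by linarith [hs.1], by linarith [hs.2]⟩ (t + c)
    ⟨by linarith [ht.1], by linarith [ht.2]⟩, add_sub_add_right_eq_sub]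

theorem IsGeodesicOn.isometry_comp {Y : Type*} [MetricSpace Y] {γ : ℝ → X} {a b : ℝ}
    (h : IsGeodesicOn γ a b) {f : X → Y} (hf : Isometry f) : IsGeodesicOn (f ∘ γ) a b :=
  fun s hs t ht => by rw [Function.comp_apply, Function.comp_apply, hf.dist_eq, h s hs t ht]

theorem IsGeodesicOn.continuousOn {γ : ℝ → X} {a b : ℝ} (h : IsGeodesicOn γ a b) :
    ContinuousOn γ (Icc a b) :=
  (LipschitzOnWith.mk_one fun s hs t ht => (h s hs t ht).le).continuousOn

theorem IsGeodLine.comp_add_const {L : ℝ → X} (hL : IsGeodLine L) (c : ℝ) :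
    IsGeodLine (fun t => L (t + c)) :=
  fun s t => by rw [hL, add_sub_add_right_eq_sub]

theorem IsGeodLine.isGeodesicOn {L : ℝ → X} (hL : IsGeodLine L) (a b : ℝ) :
    IsGeodesicOn L a b :=
  fun s _ t _ => hL s t

end Geodesics

section Midpoints

variable {X : Type*} [MetricSpace X]

def IsMetricMidpoint (x y m : X) : Prop :=
  dist x m = dist x y / 2 ∧ dist m y = dist x y / 2

theorem IsMetricMidpoint.symm {x y m : X} (h : IsMetricMidpoint x y m) :
    IsMetricMidpoint y x m := by
  unfold IsMetricMidpoint at *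
  rw [dist_comm y m, dist_comm m x, dist_comm y x]
  exact h.symm

theorem IsGeodesicOn.isMetricMidpoint {γ : ℝ → X} {a b s t : ℝ} (h : IsGeodesicOn γ a b)
    (hs : s ∈ Icc a b) (ht : t ∈ Icc a b) :
    IsMetricMidpoint (γ s) (γ t) (γ ((s + t) / 2)) := by
  have hm : (s + t) / 2 ∈ Icc a b :=
    ⟨by linarith [hs.1, ht.1], by linarith [hs.2, ht.2]⟩
  refine ⟨?_, ?_⟩ <;> rw [h _ ‹_› _ ‹_›, h s hs t ht]
  · rw [show s - (s + t) / 2 = (s - t) / 2 by ring, abs_div, abs_two]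
  · rw [show (s + t) / 2 - t = (s - t) / 2 by ring, abs_div, abs_two]

theorem CAT0.exists_isMetricMidpoint [CAT0 X] (x y : X) : ∃ m, IsMetricMidpoint x y m := by
  obtain ⟨γ, hγ, hγ₀, hγ₁⟩ := CAT0.geodesic x y
  have h := hγ.isMetricMidpoint ⟨le_rfl, dist_nonneg⟩ ⟨dist_nonneg, le_rfl⟩
  rw [hγ₀, hγ₁] at h
  exact ⟨_, h⟩

/-- Two applications of the CN inequality, at `y₂` and at `m₁`. -/
theorem CAT0.dist_le_half_of_isMetricMidpoint [CAT0 X] {x y₁ y₂ m₁ m₂ : X}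
    (h₁ : IsMetricMidpoint x y₁ m₁) (h₂ : IsMetricMidpoint x y₂ m₂) :
    dist m₁ m₂ ≤ dist y₁ y₂ / 2 := by
  have hy₂ := CAT0.cn y₂ x y₁ m₁ h₁.1 h₁.2
  have hm₁ := CAT0.cn m₁ x y₂ m₂ h₂.1 h₂.2
  rw [dist_comm m₁ x, h₁.1, dist_comm m₁ y₂] at hm₁
  rw [dist_comm y₂ x, dist_comm y₂ y₁] at hy₂
  nlinarith [dist_nonneg (x := m₁) (y := m₂), dist_nonneg (x := y₁) (y := y₂)]

theorem CAT0.dist_le_of_isMetricMidpoint [CAT0 X] {x₁ y₁ x₂ y₂ m₁ m₂ : X}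
    (h₁ : IsMetricMidpoint x₁ y₁ m₁) (h₂ : IsMetricMidpoint x₂ y₂ m₂) :
    dist m₁ m₂ ≤ (dist x₁ x₂ + dist y₁ y₂) / 2 := by
  obtain ⟨m, hm⟩ := CAT0.exists_isMetricMidpoint x₁ y₂
  have h₁m := CAT0.dist_le_half_of_isMetricMidpoint h₁ hm
  have hm₂ := CAT0.dist_le_half_of_isMetricMidpoint hm.symm h₂.symm
  linarith [dist_triangle m₁ m m₂, dist_comm x₁ x₂]

end Midpoints

theorem le_max_of_midpoint_le {g : ℝ → ℝ} (hc : ContinuousOn g (Icc 0 1))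
    (hmid : ∀ a ∈ Icc (0 : ℝ) 1, ∀ b ∈ Icc (0 : ℝ) 1, g ((a + b) / 2) ≤ (g a + g b) / 2)
    {t : ℝ} (ht : t ∈ Icc (0 : ℝ) 1) : g t ≤ max (g 0) (g 1) := by
  obtain ⟨x₀, hx₀, hmax⟩ := isCompact_Icc.exists_isMaxOn ⟨0, by norm_num⟩ hc
  have hS : IsCompact (Icc 0 1 ∩ g ⁻¹' {g x₀}) :=
    isCompact_Icc.of_isClosed_subset
      (hc.preimage_isClosed_of_isClosed isClosed_Icc isClosed_singleton) inter_subset_left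
  -- the leftmost maximum point can only be an endpoint
  obtain ⟨l, ⟨hl, hlmax⟩, hleast⟩ := hS.exists_isLeast ⟨x₀, hx₀, rfl⟩
  refine (hmax ht).trans ?_
  rw [← mem_singleton_iff.mp hlmax]
  rcases hl.1.eq_or_lt with rfl | hl₀
  · exact le_max_left _ _
  rcases hl.2.eq_or_lt with rfl | hl₁
  · exact le_max_right _ _
  set δ := min l (1 - l)
  have hδ : 0 < δ := lt_min hl₀ (by linarith)
  have hleft : l - δ ∈ Icc (0 : ℝ) 1 := ⟨by linarith [min_le_left l (1 - l)], by linarith⟩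
  have hright : l + δ ∈ Icc (0 : ℝ) 1 := ⟨by linarith, by linarith [min_le_right l (1 - l)]⟩
  have hlt : g (l - δ) < g x₀ := (hmax hleft).lt_of_ne fun h =>
    absurd (hleast ⟨hleft, h⟩) (by linarith)
  have := hmid _ hleft _ hright
  rw [show (l - δ + (l + δ)) / 2 = l by ring, mem_singleton_iff.mp hlmax] at this
  have hle : g (l + δ) ≤ g x₀ := hmax hright
  linarith

section CAT0

variable {X : Type*} [MetricSpace X] [CAT0 X]

theorem CAT0.dist_le_max_of_isGeodesicOn {γ₁ γ₂ : ℝ → X} {l₁ l₂ : ℝ}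
    (h₁ : IsGeodesicOn γ₁ 0 l₁) (h₂ : IsGeodesicOn γ₂ 0 l₂) (hl₁ : 0 ≤ l₁) (hl₂ : 0 ≤ l₂)
    {s : ℝ} (hs : s ∈ Icc (0 : ℝ) 1) :
    dist (γ₁ (s * l₁)) (γ₂ (s * l₂)) ≤ max (dist (γ₁ 0) (γ₂ 0)) (dist (γ₁ l₁) (γ₂ l₂)) := by
  have hmaps : ∀ {l : ℝ}, 0 ≤ l → MapsTo (fun s => s * l) (Icc 0 1) (Icc 0 l) :=
    fun hl s hs => ⟨mul_nonneg hs.1 hl, mul_le_of_le_one_left hl hs.2⟩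
  have key := le_max_of_midpoint_le (g := fun s => dist (γ₁ (s * l₁)) (γ₂ (s * l₂)))
    (continuous_dist.comp_continuousOn <| ContinuousOn.prodMk
      (h₁.continuousOn.comp (continuous_mul_const l₁).continuousOn (hmaps hl₁))
      (h₂.continuousOn.comp (continuous_mul_const l₂).continuousOn (hmaps hl₂)))
    (fun a ha b hb => by
      simp only [show ∀ l : ℝ, (a + b) / 2 * l = (a * l + b * l) / 2 from fun l => by ring]
      exact CAT0.dist_le_of_isMetricMidpoint
        (h₁.isMetricMidpoint (hmaps hl₁ ha) (hmaps hl₁ hb))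
        (h₂.isMetricMidpoint (hmaps hl₂ ha) (hmaps hl₂ hb)))
    hs
  simpa only [zero_mul, one_mul] using key

end CAT0

theorem tendsto_natCast_add_one_ultrafilterOf_atTop :
    Tendsto (fun n : ℕ => (n : ℝ) + 1) (Ultrafilter.of (atTop : Filter ℕ)) atTop :=
  (tendsto_atTop_add_const_right _ 1 tendsto_natCast_atTop_atTop).mono_left (Ultrafilter.of_le _)

theorem exists_isGeodLine_tendsto {X ι : Type*} [MetricSpace X] [ProperSpace X]
    (U : Ultrafilter ι) {γ : ι → ℝ → X} {T : ι → ℝ} (hT : Tendsto T U atTop)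
    (hγ : ∀ i, IsGeodesicOn (γ i) (-T i) (T i)) {o : X} {K : ℝ}
    (hK : ∀ᶠ i in U, dist (γ i 0) o ≤ K) :
    ∃ L : ℝ → X, IsGeodLine L ∧ ∀ t, Tendsto (fun i => γ i t) U (𝓝 (L t)) := by
  have hdom : ∀ t, ∀ᶠ i in U, t ∈ Icc (-T i) (T i) :=
    fun t => (hT.eventually_ge_atTop |t|).mono fun i hi => abs_le.mp hi
  have hlim : ∀ t, ∃ x, Tendsto (fun i => γ i t) U (𝓝 x) := by
    intro t
    have hball : ∀ᶠ i in U, γ i t ∈ closedBall o (|t| + K) := by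
      filter_upwards [hdom t, hdom 0, hK] with i ht h₀ hi
      have := dist_triangle (γ i t) (γ i 0) o
      rw [hγ i t ht 0 h₀, sub_zero] at this
      exact mem_closedBall.mpr (by linarith)
    obtain ⟨x, -, hx⟩ :=
      (isCompact_closedBall o (|t| + K)).ultrafilter_le_nhds' (U.map _)
        (Ultrafilter.mem_map.mpr hball)
    exact ⟨x, hx⟩
  choose L hL using hlim
  refine ⟨L, fun s t => tendsto_nhds_unique ((hL s).dist (hL t)) ?_, hL⟩
  exact tendsto_const_nhds.congr' <|
    ((hdom s).and (hdom t)).mono fun i hi => (hγ i s hi.1 t hi.2).symm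

section CAT0

variable {X : Type*} [MetricSpace X] [CAT0 X]

/-- `τ` is the geodesic between points of `C` closest to `L (-(S + r))` and `L (S + r)`,
recentred: it is `r`-close to `L` in proportional parametrisation, and recentring costs another
`r`. -/
theorem CAT0.exists_geodesic_subset_near_line [ProperSpace X] {C : Set X} (hne : C.Nonempty)
    (hC : IsClosed C) (hconv : GeodConvex C) {L : ℝ → X} (hL : IsGeodLine L) {r : ℝ}
    (hr : ∀ t, infDist (L t) C ≤ r) {S : ℝ} (hS : 0 < S) :
    ∃ τ : ℝ → X, ∃ T, S ≤ T ∧ IsGeodesicOn τ (-T) T ∧ (∀ t ∈ Icc (-T) T, τ t ∈ C) ∧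
      ∀ t ∈ Icc (-S) S, dist (L t) (τ t) ≤ 2 * r := by
  have hr₀ : 0 ≤ r := infDist_nonneg.trans (hr 0)
  set N := S + r
  have hSN : S ≤ N := le_add_of_nonneg_right hr₀
  have hN : 0 < N := hS.trans_le hSN
  obtain ⟨u, hu, hLu⟩ := hC.exists_infDist_eq_dist hne (L (-N))
  obtain ⟨v, hv, hLv⟩ := hC.exists_infDist_eq_dist hne (L N)
  obtain ⟨σ, hσ, hσu, hσv⟩ := CAT0.geodesic u v
  set D := dist u v
  have hD : |D - 2 * N| ≤ 2 * r := by
    have := dist_dist_dist_le u v (L (-N)) (L N)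
    rw [Real.dist_eq, hL, dist_comm u (L (-N)), dist_comm v (L N), ← hLu, ← hLv,
      show -N - N = -(2 * N) by ring, abs_neg, abs_of_pos (by linarith : (0 : ℝ) < 2 * N)] at this
    linarith [hr (-N), hr N]
  have hT : S ≤ D / 2 := by linarith [(abs_le.mp hD).1]
  refine ⟨fun t => σ (t + D / 2), D / 2, hT, ?_, fun t ht => ?_, fun t ht => ?_⟩
  · convert hσ.comp_add_const (D / 2) using 1 <;> ring
  · exact hconv σ 0 D dist_nonneg hσ (hσu ▸ hu) (hσv ▸ hv) _
      ⟨by linarith [ht.1], by linarith [ht.2]⟩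
  · set s := (t + N) / (2 * N)
    have hs : s ∈ Icc (0 : ℝ) 1 :=
      ⟨div_nonneg (by linarith [ht.1]) (by positivity),
        (div_le_one (by positivity)).mpr (by linarith [ht.2])⟩
    have hchord := CAT0.dist_le_max_of_isGeodesicOn
      ((hL.comp_add_const (-N)).isGeodesicOn 0 (2 * N)) hσ (by positivity) dist_nonneg hs
    have hshift : dist (σ (s * D)) (σ (t + D / 2)) ≤ r := by
      rw [hσ _ ⟨mul_nonneg hs.1 dist_nonneg, mul_le_of_le_one_left dist_nonneg hs.2⟩ _
          ⟨by linarith [ht.1], by linarith [ht.2]⟩,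
        show s * D - (t + D / 2) = t * (D - 2 * N) / (2 * N) by simp only [s]; field_simp; ring,
        abs_div, abs_mul, abs_of_pos (by positivity : (0 : ℝ) < 2 * N), div_le_iff₀ (by positivity)]
      nlinarith [mul_le_mul (abs_le.mpr ht) hD (abs_nonneg _) hS.le]
    simp only [show s * (2 * N) + -N = t by simp only [s]; field_simp; ring, hσu, hσv, zero_add,
      show 2 * N + -N = N by ring] at hchord
    calc dist (L t) (σ (t + D / 2))
        ≤ dist (L t) (σ (s * D)) + dist (σ (s * D)) (σ (t + D / 2)) := dist_triangle _ _ _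
      _ ≤ r + r := add_le_add (hchord.trans (max_le (hLu ▸ hr _) (hLv ▸ hr _))) hshift
      _ = 2 * r := by ring

end CAT0

theorem CAT0.parallelToLineIn_of_infDist_le {X : Type*} [MetricSpace X] [ProperSpace X] [CAT0 X]
    {C : Set X} (hne : C.Nonempty) (hC : IsClosed C) (hconv : GeodConvex C) {L : ℝ → X}
    (hL : IsGeodLine L) {r : ℝ} (hr : ∀ t, infDist (L t) C ≤ r) : ParallelToLineIn C L := by
  choose τ T hST hτ hτC hτL using fun n : ℕ =>
    CAT0.exists_geodesic_subset_near_line hne hC hconv hL hr (S := n + 1) (by positivity)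
  set U := Ultrafilter.of (atTop : Filter ℕ)
  have hS := tendsto_natCast_add_one_ultrafilterOf_atTop
  have hT : Tendsto T U atTop := tendsto_atTop_mono hST hS
  have hτ₀ : ∀ n, dist (τ n 0) (L 0) ≤ 2 * r := fun n => by
    rw [dist_comm]
    exact hτL n 0 ⟨by linarith [(n.cast_nonneg : (0 : ℝ) ≤ n)], by positivity⟩
  obtain ⟨L₂, hL₂, hlim⟩ := exists_isGeodLine_tendsto U hT hτ (Eventually.of_forall hτ₀)
  refine ⟨L₂, hL₂, fun t => hC.mem_of_tendsto (hlim t) ?_, 2 * r, fun t => ?_⟩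
  · exact (hT.eventually_ge_atTop |t|).mono fun n hn => hτC n t (abs_le.mp hn)
  · exact le_of_tendsto (tendsto_const_nhds.dist (hlim t))
      ((hS.eventually_ge_atTop |t|).mono fun n hn => hτL n t (abs_le.mp hn))

section Cocompact

variable {X : Type*} [MetricSpace X] {C : Set X} {Γ₀ : Subgroup (X ≃ᵢ X)}

theorem infDist_symm_apply_of_image_eq {g : X ≃ᵢ X} (hg : g '' C = C) (x : X) :
    infDist (g.symm x) C = infDist x C := by
  rw [← infDist_image g.isometry, hg, g.apply_symm_apply]

theorem exists_recentered_geodesic (hne : C.Nonempty)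
    (hinv : ∀ g ∈ Γ₀, (g : X ≃ᵢ X) '' C = C) {o : X} {R₀ : ℝ}
    (hcocpt : ∀ x ∈ C, ∃ g ∈ Γ₀, dist x ((g : X ≃ᵢ X) o) ≤ R₀)
    {ℓ : ℝ → X} {a b : ℝ} (hℓ : IsGeodesicOn ℓ a b) {r : ℝ}
    (hnear : ∀ t ∈ Icc a b, infDist (ℓ t) C < r) {T t₀ : ℝ} (hT : 0 ≤ T)
    (ht₀ : t₀ ∈ Icc (a + T) (b - T)) :
    ∃ γ : ℝ → X, IsGeodesicOn γ (-T) T ∧ (∀ t ∈ Icc (-T) T, infDist (γ t) C < r) ∧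
      infDist (γ 0) C = infDist (ℓ t₀) C ∧ dist (γ 0) o ≤ r + R₀ := by
  have hmem : ∀ t ∈ Icc (-T) T, t + t₀ ∈ Icc a b :=
    fun t ht => ⟨by linarith [ht.1, ht₀.1], by linarith [ht.2, ht₀.2]⟩
  obtain ⟨p, hp, hℓp⟩ :=
    (infDist_lt_iff hne).mp (hnear t₀ (by simpa using hmem 0 ⟨by linarith, hT⟩))
  obtain ⟨g, hg, hpg⟩ := hcocpt p hp
  refine ⟨(g : X ≃ᵢ X).symm ∘ fun t => ℓ (t + t₀), ?_, fun t ht => ?_, ?_, ?_⟩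
  · exact ((hℓ.comp_add_const t₀).mono (by linarith [ht₀.1]) (by linarith [ht₀.2])).isometry_comp
      (g : X ≃ᵢ X).symm.isometry
  · rw [Function.comp_apply, infDist_symm_apply_of_image_eq (hinv g hg)]
    exact hnear _ (hmem t ht)
  · rw [Function.comp_apply, infDist_symm_apply_of_image_eq (hinv g hg), zero_add]
  · rw [Function.comp_apply, zero_add, ← (g : X ≃ᵢ X).dist_eq, IsometryEquiv.apply_symm_apply]
    linarith [dist_triangle (ℓ t₀) p ((g : X ≃ᵢ X) o)]

end Cocompact

theorem close_long_implies_very_close_general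
    {X : Type*} [MetricSpace X] [ProperSpace X] [CAT0 X]
    (C : Set X) (hCne : C.Nonempty) (hclosed : IsClosed C) (hconv : GeodConvex C)
    (hpar : ∀ ℓ : ℝ → X, IsGeodLine ℓ → ParallelToLineIn C ℓ → ∀ t : ℝ, ℓ t ∈ C)
    (Γ₀ : Subgroup (X ≃ᵢ X)) (hinv : ∀ g ∈ Γ₀, (g : X ≃ᵢ X) '' C = C)
    (o : X) (R₀ : ℝ)
    (hcocpt : ∀ x ∈ C, ∃ g ∈ Γ₀, dist x ((g : X ≃ᵢ X) o) ≤ R₀) :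
    ∀ r ε : ℝ, ε < r → 0 < ε → ∃ C₀ : ℝ, 0 < C₀ ∧
      ∀ ℓ : ℝ → X, ∀ a b : ℝ, a ≤ b → IsGeodesicOn ℓ a b →
        (∀ t ∈ Set.Icc a b, Metric.infDist (ℓ t) C < r) →
        ∀ t ∈ Set.Icc (a + C₀) (b - C₀), Metric.infDist (ℓ t) C < ε := by
  intro r ε _ hε
  by_contra! hcon
  have hbad : ∀ n : ℕ, ∃ γ : ℝ → X, IsGeodesicOn γ (-(n + 1)) (n + 1) ∧
      (∀ t ∈ Icc (-(n + 1 : ℝ)) (n + 1), infDist (γ t) C < r) ∧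
      ε ≤ infDist (γ 0) C ∧ dist (γ 0) o ≤ r + R₀ := fun n => by
    obtain ⟨ℓ, a, b, -, hℓ, hnear, t₀, ht₀, hfar⟩ := hcon (n + 1) (by positivity)
    obtain ⟨γ, hγ, hγnear, hγ₀, hγo⟩ :=
      exists_recentered_geodesic hCne hinv hcocpt hℓ hnear (by positivity) ht₀
    exact ⟨γ, hγ, hγnear, hγ₀ ▸ hfar, hγo⟩
  choose γ hγ hnear hfar hbase using hbad
  set U := Ultrafilter.of (atTop : Filter ℕ)
  have hT := tendsto_natCast_add_one_ultrafilterOf_atTop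
  obtain ⟨L, hL, hlim⟩ := exists_isGeodLine_tendsto U hT hγ (Eventually.of_forall hbase)
  have hinfDist : ∀ t, Tendsto (fun n => infDist (γ n t) C) U (𝓝 (infDist (L t) C)) :=
    fun t => ((continuous_infDist_pt C).tendsto _).comp (hlim t)
  have hLnear : ∀ t, infDist (L t) C ≤ r := fun t => le_of_tendsto (hinfDist t)
    ((hT.eventually_ge_atTop |t|).mono fun n hn => (hnear n t (abs_le.mp hn)).le)
  have hLfar : ε ≤ infDist (L 0) C := ge_of_tendsto (hinfDist 0) (Eventually.of_forall hfar)
  have hL₀ : L 0 ∈ C :=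
    hpar L hL (CAT0.parallelToLineIn_of_infDist_le hCne hclosed hconv hL hLnear) 0
  linarith [infDist_zero_of_mem hL₀]

/-- Proposition 4.6: if `C` is a closed convex Morse subset of a proper CAT(0) space,
containing all geodesic lines parallel to geodesic lines in `C`, on which a group `Γ₀`
of isometries acts cocompactly, then for all `r > ε > 0` there is `C₀ > 0` such that a
geodesic segment staying in the `r`-neighborhood of `C` on `[a,b]` stays in the
`ε`-neighborhood of `C` on `[a + C₀, b - C₀]`. -/
theorem close_long_implies_very_close
    {X : Type*} [MetricSpace X] [ProperSpace X] [CAT0 X]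
    (C : Set X) (hCne : C.Nonempty) (hclosed : IsClosed C) (hconv : GeodConvex C)
    (hMorse : IsMorse C)
    (hpar : ∀ ℓ : ℝ → X, IsGeodLine ℓ → ParallelToLineIn C ℓ → ∀ t : ℝ, ℓ t ∈ C)
    (Γ₀ : Subgroup (X ≃ᵢ X)) (hinv : ∀ g ∈ Γ₀, (g : X ≃ᵢ X) '' C = C)
    (o : X) (ho : o ∈ C) (R₀ : ℝ)
    (hcocpt : ∀ x ∈ C, ∃ g ∈ Γ₀, dist x ((g : X ≃ᵢ X) o) ≤ R₀) :
    ∀ r ε : ℝ, ε < r → 0 < ε → ∃ C₀ : ℝ, 0 < C₀ ∧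
      ∀ ℓ : ℝ → X, ∀ a b : ℝ, a ≤ b → IsGeodesicOn ℓ a b →
        (∀ t ∈ Set.Icc a b, Metric.infDist (ℓ t) C < r) →
        ∀ t ∈ Set.Icc (a + C₀) (b - C₀), Metric.infDist (ℓ t) C < ε :=
  close_long_implies_very_close_general C hCne hclosed hconv hpar Γ₀ hinv o R₀ hcocpt
end
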